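/- In the discrete-time dual risk model with delay r ∈ ℕ⁺, the infinite-time Parisian survival probability factorizes through the classic dual ruin probability: for every u ∈ ℕ, φ*_r(u) = ψ*(u) · φ*_r(0) + φ*(u); equivalently, ψ*_r(u) = ψ*(u) · ψ*_r(0). -/

import Mathlib

open MeasureTheory ProbabilityTheory

noncomputable section

variable {Ω : Type*} [MeasurableSpace Ω]

/-- The reserve process of the discrete-time dual risk model with initial capital `u`:
`R*_n = u - n + ∑_{i=1}^n Y_i`. -/
def reserve (Y : ℕ → Ω → ℕ) (u : ℤ) (n : ℕ) (ω : Ω) : ℤ :=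
  u - n + ∑ i ∈ Finset.range n, (Y i ω : ℤ)

/-- The probability mass function of the gain size distribution: `p_k = P(Y_1 = k)`. -/
def gainPMF (μ : Measure Ω) (Y : ℕ → Ω → ℕ) (k : ℕ) : ℝ :=
  (μ {ω | Y 0 ω = k}).toReal

/-- The `n`-fold convolution of the gain size pmf: `p^{*n}_k = P(Y_1 + ⋯ + Y_n = k)`
(with `p^{*0}_k = 1` iff `k = 0`, automatically, since the empty sum is `0`). -/
def conv (μ : Measure Ω) (Y : ℕ → Ω → ℕ) (n k : ℕ) : ℝ :=
  (μ {ω | ∑ i ∈ Finset.range n, Y i ω = k}).toReal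

/-- The gains `(Y_i)` are i.i.d. (and measurable). -/
def IsIID (μ : Measure Ω) (Y : ℕ → Ω → ℕ) : Prop :=
  (∀ i, Measurable (Y i)) ∧
    iIndepFun Y μ ∧ ∀ i, IdentDistrib (Y i) (Y 0) μ μ

/-- Net profit condition: `μ = E[Y_1] > 1` (in particular the mean is finite). -/
def NetProfit (μ : Measure Ω) (Y : ℕ → Ω → ℕ) : Prop :=
  Integrable (fun ω => (Y 0 ω : ℝ)) μ ∧ 1 < ∫ ω, (Y 0 ω : ℝ) ∂μ

/-- Parisian ruin with delay `r` happens, with the deficit window starting with a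
down-crossing (from level `0` to level `-1`) at time `s`: the reserve stays strictly
negative throughout the `r + 1` consecutive periods `s, s+1, …, s+r`. -/
def parisianWindow (Y : ℕ → Ω → ℕ) (u : ℤ) (r s : ℕ) (ω : Ω) : Prop :=
  1 ≤ s ∧ reserve Y u (s - 1) ω = 0 ∧ reserve Y u s ω = -1 ∧
    ∀ m, s ≤ m → m ≤ s + r → reserve Y u m ω < 0

/-- Finite-time Parisian ruin probability `ψ*_r(u,t) = P_u(τ^r < t)`:
the Parisian ruin time `τ^r = s + r` exceeds some down-crossing time `s` by `r`. -/
def parisianRuinBy (μ : Measure Ω) (Y : ℕ → Ω → ℕ) (u : ℤ) (r t : ℕ) : ℝ :=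
  (μ {ω | ∃ s, parisianWindow Y u r s ω ∧ s + r < t}).toReal

/-- Infinite-time Parisian ruin probability `ψ*_r(u) = P_u(τ^r < ∞)`. -/
def parisianRuin (μ : Measure Ω) (Y : ℕ → Ω → ℕ) (u : ℤ) (r : ℕ) : ℝ :=
  (μ {ω | ∃ s, parisianWindow Y u r s ω}).toReal

/-- Infinite-time dual ruin probability `ψ*(u) = P_u(τ* < ∞)`, where
`τ* = inf{n : R*_n = 0}`. -/
def dualRuinProb (μ : Measure Ω) (Y : ℕ → Ω → ℕ) (u : ℤ) : ℝ :=
  (μ {ω | ∃ n, reserve Y u n ω = 0}).toReal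

/-- The event `{τ* = n}` for the dual risk model started at `u`:
the reserve first hits level `0` exactly at time `n`. -/
def dualRuinAt (Y : ℕ → Ω → ℕ) (u : ℤ) (n : ℕ) : Set Ω :=
  {ω | reserve Y u n ω = 0 ∧ ∀ m < n, reserve Y u m ω ≠ 0}

/-- The event `{τ⁻ = n, R*_{τ⁻} = k}` for the process started at `-1`: the recovery
(first return to a non-negative level) happens at time `n` with level `k` at recovery. -/
def recoveryAt (Y : ℕ → Ω → ℕ) (n k : ℕ) : Set Ω :=
  {ω | reserve Y (-1) n ω = (k : ℤ) ∧ ∀ s < n, reserve Y (-1) s ω < 0}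

/-- `P_{-1}(τ⁻ ≤ r, R*_{τ⁻} = k)`: starting from `-1`, recovery happens within `r`
periods, with level `k` at recovery. -/
def recoveryWithinProb (μ : Measure Ω) (Y : ℕ → Ω → ℕ) (r k : ℕ) : ℝ :=
  (μ {ω | ∃ n, 1 ≤ n ∧ n ≤ r ∧ reserve Y (-1) n ω = (k : ℤ) ∧
      ∀ s < n, reserve Y (-1) s ω < 0}).toReal

/-- Finite-time survival probability `φ(v,t)` of the compound binomial risk process
`R_n = v + n - ∑_{i=1}^n Y_i`. -/
def classicalSurvival (μ : Measure Ω) (Y : ℕ → Ω → ℕ) (v : ℕ) (t : ℕ) : ℝ :=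
  (μ {ω | ∀ n < t, 0 < (v : ℤ) + n - ∑ i ∈ Finset.range n, (Y i ω : ℤ)}).toReal

/-!
Parisian ruin needs a down-crossing from level `0`, so it can only happen after the first
time `τ*` at which the reserve hits `0`. On `{τ* = n}` the reserve from time `n` on is the
reserve started at `0` and driven by the shifted gains `(Y (n + i))ᵢ`, and Parisian ruin of
the original process is exactly Parisian ruin of this restarted one. The event `{τ* = n}` is
determined by `Y 0, …, Y (n - 1)`, which are independent of the shifted gains, and the shifted
gains have the same joint law as `(Y i)ᵢ`. Summing over `n` gives `ψ*_r(u) = ψ*(u) ψ*_r(0)`.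
-/

section IID

variable {β : Type*} [mβ : MeasurableSpace β] {μ : Measure Ω} {X : ℕ → Ω → β}

theorem identDistrib_shift (hm : ∀ i, Measurable (X i)) (hind : iIndepFun X μ)
    (hid : ∀ i, IdentDistrib (X i) (X 0) μ μ) (n : ℕ) :
    IdentDistrib (fun ω i => X (n + i) ω) (fun ω i => X i ω) μ μ where
  aemeasurable_fst := (measurable_pi_iff.2 fun i => hm (n + i)).aemeasurable
  aemeasurable_snd := (measurable_pi_iff.2 hm).aemeasurable
  map_eq := by
    rw [(hind.precomp (add_right_injective n)).map_fun_eq_infinitePi_map fun i => hm (n + i),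
      hind.map_fun_eq_infinitePi_map hm]
    congr 1
    funext i
    simp only [(hid (n + i)).map_eq, (hid i).map_eq]

omit [MeasurableSpace Ω] in
theorem measurable_iSup_comap {S : Set ℕ} {i : ℕ} (hi : i ∈ S) :
    Measurable[⨆ j ∈ S, mβ.comap (X j)] (X i) :=
  (comap_measurable (X i)).mono (le_iSup₂ (f := fun j (_ : j ∈ S) => mβ.comap (X j)) i hi) le_rfl

theorem measure_inter_preimage_shift (hm : ∀ i, Measurable (X i)) (hind : iIndepFun X μ)
    (hid : ∀ i, IdentDistrib (X i) (X 0) μ μ) {n : ℕ} {A : Set Ω}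
    (hA : MeasurableSet[⨆ i ∈ Set.Iio n, mβ.comap (X i)] A)
    {B : Set (ℕ → β)} (hB : MeasurableSet B) :
    μ (A ∩ (fun ω i => X (n + i) ω) ⁻¹' B) = μ A * μ ((fun ω i => X i ω) ⁻¹' B) := by
  have hindep := indep_iSup_of_disjoint (fun i => (hm i).comap_le) hind.iIndep
    (Set.Iio_disjoint_Ici (le_refl n))
  have hshift : Measurable[⨆ i ∈ Set.Ici n, mβ.comap (X i)] (fun ω i => X (n + i) ω) :=
    @measurable_pi_iff Ω ℕ (fun _ => β) (⨆ i ∈ Set.Ici n, mβ.comap (X i)) _ _ |>.2 fun i =>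
      measurable_iSup_comap (Nat.le_add_right n i)
  rw [(Indep_iff _ _ μ).1 hindep A _ hA (hshift hB),
    (identDistrib_shift hm hind hid n).measure_mem_eq hB]

end IID

section Pathwise

omit [MeasurableSpace Ω]

variable {Y : ℕ → Ω → ℕ} {u : ℤ} {r : ℕ} {ω : Ω}

theorem reserve_add (n m : ℕ) :
    reserve Y u (n + m) ω = reserve Y u n ω + reserve (fun i => Y (n + i)) 0 m ω := by
  simp only [reserve, Finset.sum_range_add]
  push_cast
  ring

theorem parisianWindow_shift_iff {n t : ℕ} (h0 : reserve Y u n ω = 0) (ht : 1 ≤ t) :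
    parisianWindow (fun i => Y (n + i)) 0 r t ω ↔ parisianWindow Y u r (n + t) ω := by
  have hshift (m : ℕ) : reserve Y u (n + m) ω = reserve (fun i => Y (n + i)) 0 m ω := by
    rw [reserve_add, h0, zero_add]
  simp only [parisianWindow, show n + t - 1 = n + (t - 1) by omega, hshift]
  constructor
  · rintro ⟨-, h1, h2, hneg⟩
    refine ⟨by omega, h1, h2, fun m hm hm' => ?_⟩
    obtain ⟨k, rfl⟩ := Nat.exists_eq_add_of_le (le_of_add_le_left hm)
    rw [hshift]
    exact hneg k (by omega) (by omega)
  · rintro ⟨-, h1, h2, hneg⟩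
    exact ⟨ht, h1, h2, fun m hm hm' => hshift m ▸ hneg (n + m) (by omega) (by omega)⟩

theorem exists_mem_dualRuinAt_le {k : ℕ} (h : reserve Y u k ω = 0) :
    ∃ n ≤ k, ω ∈ dualRuinAt Y u n := by
  classical
  have hex : ∃ n, reserve Y u n ω = 0 := ⟨k, h⟩
  exact ⟨Nat.find hex, Nat.find_min' hex h, Nat.find_spec hex, fun m hm => Nat.find_min hex hm⟩

variable (Y u) in
theorem iUnion_dualRuinAt :
    ⋃ n, dualRuinAt Y u n = {ω | ∃ n, reserve Y u n ω = 0} := by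
  ext ω
  simp only [Set.mem_iUnion]
  constructor
  · rintro ⟨n, h, -⟩
    exact ⟨n, h⟩
  · rintro ⟨k, h⟩
    obtain ⟨n, -, hn⟩ := exists_mem_dualRuinAt_le h
    exact ⟨n, hn⟩

variable (Y u) in
theorem pairwise_disjoint_dualRuinAt :
    Pairwise (Function.onFun Disjoint (dualRuinAt Y u)) := by
  intro n n' hne
  refine Set.disjoint_left.2 fun ω ⟨h, hmin⟩ ⟨h', hmin'⟩ => ?_
  rcases lt_or_gt_of_ne hne with hlt | hlt
  · exact hmin' n hlt h
  · exact hmin n' hlt h'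

theorem exists_parisianWindow_iff :
    (∃ s, parisianWindow Y u r s ω) ↔
      ∃ n, ω ∈ dualRuinAt Y u n ∧ ∃ t, parisianWindow (fun i => Y (n + i)) 0 r t ω := by
  constructor
  · rintro ⟨s, hs⟩
    obtain ⟨n, hn, hτ⟩ := exists_mem_dualRuinAt_le hs.2.1
    have hs1 : 1 ≤ s := hs.1
    refine ⟨n, hτ, s - n, (parisianWindow_shift_iff hτ.1 (by omega)).2 ?_⟩
    rwa [Nat.add_sub_cancel' (by omega)]
  · rintro ⟨n, hτ, t, ht⟩
    exact ⟨n + t, (parisianWindow_shift_iff hτ.1 ht.1).1 ht⟩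

end Pathwise

section Measurability

omit [MeasurableSpace Ω]

variable {m : MeasurableSpace Ω} {Y : ℕ → Ω → ℕ}

theorem measurable_reserve {n : ℕ} (hY : ∀ i < n, Measurable[m] (Y i)) (u : ℤ) :
    Measurable[m] (reserve Y u n) :=
  measurable_const.add <| Finset.measurable_sum _ fun i hi =>
    measurable_from_nat.comp (hY i (Finset.mem_range.1 hi))

theorem measurableSet_dualRuinAt {n : ℕ} (hY : ∀ i < n, Measurable[m] (Y i)) (u : ℤ) :
    MeasurableSet[m] (dualRuinAt Y u n) := by
  have hres {k : ℕ} (hk : k ≤ n) : Measurable[m] (reserve Y u k) :=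
    measurable_reserve (fun i hi => hY i (by omega)) u
  refine measurableSet_setOfPred.2 <| ((hres le_rfl).eq_const 0).and <|
    Measurable.forall fun k => ?_
  by_cases hk : k < n
  · simpa only [hk, true_imp_iff] using ((hres hk.le).eq_const 0).not
  · simpa only [hk, false_imp_iff] using measurable_const

theorem measurableSet_exists_parisianWindow (hY : ∀ i, Measurable[m] (Y i)) (u : ℤ) (r : ℕ) :
    MeasurableSet[m] {ω | ∃ s, parisianWindow Y u r s ω} := by
  have hres (k : ℕ) : Measurable[m] (reserve Y u k) := measurable_reserve (fun i _ => hY i) u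
  refine measurableSet_setOfPred.2 <| Measurable.exists fun s => ?_
  unfold parisianWindow
  fun_prop

end Measurability

theorem measure_exists_parisianWindow_eq_mul {μ : Measure Ω} {Y : ℕ → Ω → ℕ} (hY : IsIID μ Y)
    (u : ℤ) (r : ℕ) :
    μ {ω | ∃ s, parisianWindow Y u r s ω} =
      μ {ω | ∃ n, reserve Y u n ω = 0} * μ {ω | ∃ s, parisianWindow Y 0 r s ω} := by
  obtain ⟨hm, hind, hid⟩ := hY
  set W : Set (ℕ → ℕ) := {z | ∃ s, parisianWindow (fun i z => z i) 0 r s z}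
  have hW : MeasurableSet W := measurableSet_exists_parisianWindow measurable_pi_apply 0 r
  have hdecomp : {ω | ∃ s, parisianWindow Y u r s ω} =
      ⋃ n, dualRuinAt Y u n ∩ (fun ω i => Y (n + i) ω) ⁻¹' W := by
    ext ω
    simp only [Set.mem_iUnion, Set.mem_inter_iff]
    exact exists_parisianWindow_iff
  have hτ (n : ℕ) : MeasurableSet (dualRuinAt Y u n) :=
    measurableSet_dualRuinAt (fun i _ => hm i) u
  calc μ {ω | ∃ s, parisianWindow Y u r s ω}
      = ∑' n, μ (dualRuinAt Y u n ∩ (fun ω i => Y (n + i) ω) ⁻¹' W) := by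
        rw [hdecomp]
        exact measure_iUnion
          ((pairwise_disjoint_dualRuinAt Y u).mono fun _ _ h =>
            h.mono Set.inter_subset_left Set.inter_subset_left)
          fun n => (hτ n).inter (measurable_pi_iff.2 (fun i => hm (n + i)) hW)
    _ = ∑' n, μ (dualRuinAt Y u n) * μ ((fun ω i => Y i ω) ⁻¹' W) :=
        tsum_congr fun n => measure_inter_preimage_shift hm hind hid
          (measurableSet_dualRuinAt (fun i hi => measurable_iSup_comap hi) u) hW
    _ = μ {ω | ∃ n, reserve Y u n ω = 0} * μ {ω | ∃ s, parisianWindow Y 0 r s ω} := by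
        rw [ENNReal.tsum_mul_right, ← measure_iUnion (pairwise_disjoint_dualRuinAt Y u) hτ,
          iUnion_dualRuinAt]
        rfl

theorem parisian_ruin_factorization_general
    (μ : Measure Ω) (Y : ℕ → Ω → ℕ) (hY : IsIID μ Y) (r : ℕ) (u : ℕ) :
    (1 - parisianRuin μ Y (u : ℤ) r
        = dualRuinProb μ Y (u : ℤ) * (1 - parisianRuin μ Y 0 r)
          + (1 - dualRuinProb μ Y (u : ℤ))) ∧
      parisianRuin μ Y (u : ℤ) r
        = dualRuinProb μ Y (u : ℤ) * parisianRuin μ Y 0 r := by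
  have hψ : parisianRuin μ Y u r = dualRuinProb μ Y u * parisianRuin μ Y 0 r := by
    rw [parisianRuin, dualRuinProb, parisianRuin, measure_exists_parisianWindow_eq_mul hY,
      ENNReal.toReal_mul]
  exact ⟨by rw [hψ]; ring, hψ⟩

/-- The infinite-time Parisian survival probability factorizes through the classic dual
ruin probability: `φ*_r(u) = ψ*(u) φ*_r(0) + φ*(u)`, equivalently
`ψ*_r(u) = ψ*(u) ψ*_r(0)`. -/
theorem parisian_ruin_factorization
    (μ : Measure Ω) [IsProbabilityMeasure μ] (Y : ℕ → Ω → ℕ) (hY : IsIID μ Y)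
    (hnet : NetProfit μ Y) (r : ℕ) (hr : 1 ≤ r) (u : ℕ) :
    (1 - parisianRuin μ Y (u : ℤ) r
        = dualRuinProb μ Y (u : ℤ) * (1 - parisianRuin μ Y 0 r)
          + (1 - dualRuinProb μ Y (u : ℤ))) ∧
      parisianRuin μ Y (u : ℤ) r
        = dualRuinProb μ Y (u : ℤ) * parisianRuin μ Y 0 r :=
  parisian_ruin_factorization_general μ Y hY r u
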